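/- Let A be an n-dimensional evolution algebra over a field F of characteristic ≠ 2 with natural basis e_1, …, e_n, and suppose A is fourth power-associative (x²·x² = (x²·x)·x for all x ∈ A). Then for all i ≠ j one has e_i³·e_j = 0 and (e_i²·e_j)·e_i = 0, where e_i² = e_i·e_i and e_i³ = e_i²·e_i. -/

import Mathlib

/-!
Write `u_k = e_k²` and `a_kl` for the coordinates of `u_k`, so that `x·e_k = x_k u_k`.
For `y·z = 0` the identity at `y + z` and at `y - z` has the same left side, since both
square to `y² + z²`; subtracting gives `((y² + z²)y)z + ((y² + z²)z)y = 0`. Running this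
for `y ± w` and `z`, with `w, y, z` pairwise orthogonal, also gives `(w²y)z + (w²z)y = 0`.

The first relation at `e_i, e_j` reads `(a_ii + a_ji) a_ij u_j + (a_ij + a_jj) a_ji u_i = 0`.
For the second take `w = s`, the part of `u_i` off `e_i` and `e_j`: the identity at `e_i`
gives `s² = -a_ij² u_j`, hence `a_ij² a_ji (a_ij u_j + a_jj u_i) = 0`. If `a_ij a_ji ≠ 0`,
the `e_j`-coordinate `2 a_ij a_jj` of the bracket forces `a_jj = 0` and then `u_j = 0`,
contradicting `a_ji ≠ 0`. As `(u_i e_j) e_i = a_ij a_ji u_i` and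
`(u_i e_i) e_j = a_ii a_ij u_j`, both claims follow.
-/

section

variable {F A ι : Type*} [Field F] [AddCommGroup A] [Module F A]

def IsFourthPowerAssoc (m : A →ₗ[F] A →ₗ[F] A) : Prop :=
  ∀ x : A, m (m x x) (m x x) = m (m (m x x) x) x

def IsNaturalBasis (m : A →ₗ[F] A →ₗ[F] A) (e : Module.Basis ι F A) : Prop :=
  ∀ i j : ι, i ≠ j → m (e i) (e j) = 0

namespace IsFourthPowerAssoc

variable {m : A →ₗ[F] A →ₗ[F] A} (hpa4 : IsFourthPowerAssoc m)
  (hcomm : ∀ x y : A, m x y = m y x) (h2 : (2 : F) ≠ 0)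
include hpa4 hcomm h2

theorem polarization {y z : A} (hyz : m y z = 0) :
    m (m (m y y + m z z) y) z + m (m (m y y + m z z) z) y = 0 := by
  have hzy : m z y = 0 := by rw [hcomm, hyz]
  set U := m y y + m z z
  have hsq_add : m (y + z) (y + z) = U := by
    simp only [U, map_add, LinearMap.add_apply, hyz, hzy]; abel
  have hsq_sub : m (y - z) (y - z) = U := by
    simp only [U, map_sub, LinearMap.sub_apply, hyz, hzy]; abel
  have hadd := hpa4 (y + z)
  have hsub := hpa4 (y - z)
  rw [hsq_add] at hadd
  rw [hsq_sub] at hsub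
  simp only [map_add, map_sub, LinearMap.add_apply, LinearMap.sub_apply] at hadd hsub
  have h : (2 : F) • (m (m U y) z + m (m U z) y) = 0 := by
    linear_combination (norm := module) hsub - hadd
  exact (smul_eq_zero.mp h).resolve_left h2

theorem polarization_sq {w y z : A} (hwy : m w y = 0) (hwz : m w z = 0) (hyz : m y z = 0) :
    m (m (m w w) y) z + m (m (m w w) z) y = 0 := by
  have hyw : m y w = 0 := by rw [hcomm, hwy]
  have hsq (c : F) (hc : c * c = 1) : m (y + c • w) (y + c • w) = m y y + m w w := by
    simp only [map_add, map_smul, LinearMap.add_apply, LinearMap.smul_apply, hwy, hyw,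
      smul_zero, zero_add, add_zero, smul_smul, hc, one_smul]
  have hortho (c : F) : m (y + c • w) z = 0 := by
    simp only [map_add, map_smul, LinearMap.add_apply, LinearMap.smul_apply, hyz, hwz,
      smul_zero, add_zero]
  have hplus := polarization hpa4 hcomm h2 (hortho 1)
  have hminus := polarization hpa4 hcomm h2 (hortho (-1))
  have hzero := polarization hpa4 hcomm h2 hyz
  rw [hsq 1 (by ring)] at hplus
  rw [hsq (-1) (by ring)] at hminus
  simp only [map_add, map_smul, LinearMap.add_apply, LinearMap.smul_apply] at hplus hminus hzero
  have h : (2 : F) • (m (m (m w w) y) z + m (m (m w w) z) y) = 0 := by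
    linear_combination (norm := module) hplus + hminus - (2 : F) • hzero
  exact (smul_eq_zero.mp h).resolve_left h2

end IsFourthPowerAssoc

namespace IsNaturalBasis

variable {m : A →ₗ[F] A →ₗ[F] A} {e : Module.Basis ι F A}

theorem mul_basis (hnat : IsNaturalBasis m e) (x : A) (k : ι) :
    m x (e k) = e.repr x k • m (e k) (e k) := by
  refine LinearMap.congr_fun (f := m.flip (e k)) (g := (e.coord k).smulRight (m (e k) (e k)))
    (e.ext fun l => ?_) x
  rcases eq_or_ne l k with rfl | hlk
  · simp
  · simp [hnat l k hlk, hlk]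

theorem mul_basis_mul_basis (hnat : IsNaturalBasis m e) (x : A) (k l : ι) :
    m (m x (e k)) (e l) = (e.repr x k * e.repr (m (e k) (e k)) l) • m (e l) (e l) := by
  rw [hnat.mul_basis x k, map_smul, LinearMap.smul_apply, hnat.mul_basis _ l, smul_smul]

theorem polarization_basis (hnat : IsNaturalBasis m e) (hpa4 : IsFourthPowerAssoc m)
    (hcomm : ∀ x y : A, m x y = m y x) (h2 : (2 : F) ≠ 0) {i j : ι} (hij : i ≠ j) :
    ((e.repr (m (e i) (e i)) i + e.repr (m (e j) (e j)) i) * e.repr (m (e i) (e i)) j) •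
        m (e j) (e j) +
      ((e.repr (m (e i) (e i)) j + e.repr (m (e j) (e j)) j) * e.repr (m (e j) (e j)) i) •
        m (e i) (e i) = 0 := by
  have h := hpa4.polarization hcomm h2 (hnat i j hij)
  rw [hnat.mul_basis_mul_basis, hnat.mul_basis_mul_basis] at h
  simpa only [map_add, Finsupp.add_apply] using h

theorem sq_sub_smul_sub_smul (hnat : IsNaturalBasis m e) (hpa4 : IsFourthPowerAssoc m)
    (hcomm : ∀ x y : A, m x y = m y x) {i j : ι} (hij : i ≠ j) :
    m (m (e i) (e i) - e.repr (m (e i) (e i)) i • e i - e.repr (m (e i) (e i)) j • e j)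
        (m (e i) (e i) - e.repr (m (e i) (e i)) i • e i - e.repr (m (e i) (e i)) j • e j) =
      -(e.repr (m (e i) (e i)) j * e.repr (m (e i) (e i)) j) • m (e j) (e j) := by
  set u := m (e i) (e i)
  have hu : m u u = (e.repr u i * e.repr u i) • u := by
    rw [hpa4 (e i), hnat.mul_basis_mul_basis]
  have hui : m u (e i) = e.repr u i • u := hnat.mul_basis u i
  have huj : m u (e j) = e.repr u j • m (e j) (e j) := hnat.mul_basis u j
  simp only [map_sub, map_smul, LinearMap.sub_apply, LinearMap.smul_apply, hcomm (e i) u,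
    hcomm (e j) u, hui, huj, hu, hnat i j hij, hnat j i hij.symm]
  module

theorem coeff_mul_coeff_eq_zero (hnat : IsNaturalBasis m e) (hpa4 : IsFourthPowerAssoc m)
    (hcomm : ∀ x y : A, m x y = m y x) (h2 : (2 : F) ≠ 0) {i j : ι} (hij : i ≠ j) :
    e.repr (m (e i) (e i)) j * e.repr (m (e j) (e j)) i = 0 := by
  set u := m (e i) (e i)
  set v := m (e j) (e j)
  set s := u - e.repr u i • e i - e.repr u j • e j
  have hsi : m s (e i) = 0 := by
    rw [hnat.mul_basis]
    simp [s, hij]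
  have hsj : m s (e j) = 0 := by
    rw [hnat.mul_basis]
    simp [s, hij.symm]
  have h := hpa4.polarization_sq hcomm h2 hsi hsj (hnat i j hij)
  have hss : m s s = -(e.repr u j * e.repr u j) • v := sq_sub_smul_sub_smul hnat hpa4 hcomm hij
  rw [hnat.mul_basis_mul_basis, hnat.mul_basis_mul_basis, hss] at h
  simp only [map_smul, Finsupp.smul_apply, smul_eq_mul] at h
  have key : (e.repr u j * e.repr u j * e.repr v i) • (e.repr u j • v + e.repr v j • u) = 0 := by
    linear_combination (norm := module) -h
  rcases smul_eq_zero.mp key with hcoeff | hvu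
  · rcases mul_eq_zero.mp hcoeff with hqq | hr
    · rw [mul_self_eq_zero.mp hqq, zero_mul]
    · rw [hr, mul_zero]
  · have hj : (2 : F) * (e.repr u j * e.repr v j) = 0 := by
      have := congrArg (fun x => e.repr x j) hvu
      simp only [map_add, map_smul, Finsupp.add_apply, Finsupp.smul_apply, smul_eq_mul,
        map_zero, Finsupp.coe_zero, Pi.zero_apply] at this
      linear_combination this
    rcases mul_eq_zero.mp ((mul_eq_zero.mp hj).resolve_left h2) with hq | ht
    · rw [hq, zero_mul]
    · rw [ht, zero_smul, add_zero] at hvu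
      rcases smul_eq_zero.mp hvu with hq | hv
      · rw [hq, zero_mul]
      · rw [hv, map_zero, Finsupp.coe_zero, Pi.zero_apply, mul_zero]

theorem cube_mul_basis_eq_zero (hnat : IsNaturalBasis m e) (hpa4 : IsFourthPowerAssoc m)
    (hcomm : ∀ x y : A, m x y = m y x) (h2 : (2 : F) ≠ 0) {i j : ι} (hij : i ≠ j) :
    m (m (m (e i) (e i)) (e i)) (e j) = 0 := by
  rw [hnat.mul_basis_mul_basis]
  rcases mul_eq_zero.mp (coeff_mul_coeff_eq_zero hnat hpa4 hcomm h2 hij) with hq | hr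
  · rw [hq, mul_zero, zero_smul]
  · simpa [hr] using polarization_basis hnat hpa4 hcomm h2 hij

theorem sq_mul_basis_mul_basis_eq_zero (hnat : IsNaturalBasis m e) (hpa4 : IsFourthPowerAssoc m)
    (hcomm : ∀ x y : A, m x y = m y x) (h2 : (2 : F) ≠ 0) {i j : ι} (hij : i ≠ j) :
    m (m (m (e i) (e i)) (e j)) (e i) = 0 := by
  rw [hnat.mul_basis_mul_basis, coeff_mul_coeff_eq_zero hnat hpa4 hcomm h2 hij, zero_smul]

end IsNaturalBasis

end

/-- in a fourth power-associative evolution algebra over a field of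
characteristic ≠ 2, one has `eᵢ³·eⱼ = 0` and `(eᵢ²·eⱼ)·eᵢ = 0` for all `i ≠ j`. -/
theorem fourth_pa_evolution_algebra_basis_relations
    (F : Type*) [Field F] (h2 : (2 : F) ≠ 0)
    (A : Type*) [AddCommGroup A] [Module F A]
    (m : A →ₗ[F] A →ₗ[F] A) (hcomm : ∀ x y : A, m x y = m y x)
    (n : ℕ) (e : Module.Basis (Fin n) F A)
    (hnat : ∀ i j : Fin n, i ≠ j → m (e i) (e j) = 0)
    (hpa4 : ∀ x : A, m (m x x) (m x x) = m (m (m x x) x) x) :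
    ∀ i j : Fin n, i ≠ j →
      m (m (m (e i) (e i)) (e i)) (e j) = 0 ∧
      m (m (m (e i) (e i)) (e j)) (e i) = 0 :=
  fun _ _ hij => ⟨IsNaturalBasis.cube_mul_basis_eq_zero hnat hpa4 hcomm h2 hij,
    IsNaturalBasis.sq_mul_basis_mul_basis_eq_zero hnat hpa4 hcomm h2 hij⟩
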